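/- Let p ≥ 1 be an integer, let e_p be a primitive p-th root of unity in ℂ, and let t ≥ 1 be an integer. Then the following identity holds in the ring ℂ[[x]] of formal power series: (1 + x^{(2t+1)p}) · Σ_{k_t ≥ k_{t−1} ≥ … ≥ k_1 ≥ 0} (x e_p ; e_p)_{k_t} x^{k_t} ∏_{i=1}^{t−1} e_p^{k_i(k_i+1)} x^{2k_i} [k_{i+1} choose k_i]_{e_p} = (1 + x^{p}) · Σ_{p−1 ≥ k_t ≥ k_{t−1} ≥ … ≥ k_1 ≥ 0} (x e_p ; e_p)_{k_t} x^{k_t} ∏_{i=1}^{t−1} e_p^{k_i(k_i+1)} x^{2k_i} [k_{i+1} choose k_i]_{e_p}, where the first sum is over all nonincreasing chains of natural numbers of length t (it defines a formal power series since the term of a chain has x-order at least k_t) and the second sum is the finite sum over such chains with k_t ≤ p−1. -/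

import Mathlib

open PowerSeries

/-- Evaluation at `ζ : ℂ` of the Gaussian binomial coefficient `[n choose k]_q ∈ ℤ[q]`,
defined by the `q`-Pascal recursion, agreeing with
`∏_{i=1}^{k} (1−q^{n−k+i})/(1−q^i)` for `k ≤ n` and with `0` for `k > n`. -/
def qbinom : ℕ → ℕ → ℂ → ℂ
  | _, 0, _ => 1
  | 0, _ + 1, _ => 0
  | n + 1, k + 1, ζ => qbinom n k ζ + ζ ^ (k + 1) * qbinom n (k + 1) ζ

/-- The `q`-Pochhammer symbol `(x e ; e)_n = ∏_{i=0}^{n−1} (1 − e^{i+1} x)` as a formal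
power series in `x`. -/
noncomputable def pochSeries (e : ℂ) (n : ℕ) : PowerSeries ℂ :=
  ∏ i ∈ Finset.range n, (1 - PowerSeries.C (e ^ (i + 1)) * PowerSeries.X)

/-- The sum over chains `top = k_{t+1} ≥ k_t ≥ … ≥ k_1 ≥ 0` of
`∏_{i=1}^{t} e^{k_i(k_i+1)} [k_{i+1} choose k_i]_e · x^{2k_i}`, as a formal power series
in `x`; a chain is encoded as a monotone `f : Fin (t+1) → Fin (top+1)` with top value
`top` (so `f i = k_{i+1}`). -/
noncomputable def chainV (t top : ℕ) (e : ℂ) : PowerSeries ℂ :=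
  ∑ f ∈ Finset.univ.filter
      (fun f : Fin (t + 1) → Fin (top + 1) => Monotone f ∧ f (Fin.last t) = Fin.last top),
    ∏ i : Fin t,
      PowerSeries.C (e ^ ((f i.castSucc : ℕ) * ((f i.castSucc : ℕ) + 1)) *
          qbinom (f i.succ : ℕ) (f i.castSucc : ℕ) e) *
        PowerSeries.X ^ (2 * (f i.castSucc : ℕ))

/-- The contribution of all chains with fixed top entry `k_t = m`:
`(x e ; e)_m x^m Σ_{m = k_t ≥ … ≥ k_1 ≥ 0} ∏_{i=1}^{t−1} e^{k_i(k_i+1)} x^{2k_i} [k_{i+1} choose k_i]_e`. -/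
noncomputable def habiroTerm (t : ℕ) (e : ℂ) (m : ℕ) : PowerSeries ℂ :=
  pochSeries e m * PowerSeries.X ^ m * chainV (t - 1) m e

/-- The full sum over all chains `k_t ≥ … ≥ k_1 ≥ 0`, defined coefficientwise:
since the term of a chain has `x`-order at least `k_t`, the coefficient of `x^N`
only receives contributions from chains with `k_t ≤ N`. -/
noncomputable def habiroSeries (t : ℕ) (e : ℂ) : PowerSeries ℂ :=
  PowerSeries.mk fun N => ∑ m ∈ Finset.range (N + 1), PowerSeries.coeff N (habiroTerm t e m)

/-!
At a primitive `p`-th root of unity `e`, the factors `1 - e^{m+1+i} x` for `i < p` run over all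
`p`-th roots of unity, so `(x e; e)_{m+p} = (x e; e)_m (1 - x^p)`; and the `q`-Lucas property
`[m+p, k]_e = [m, k]_e + [m, k-p]_e` shows that the chain sum with top entry `m + p` is
`1 + x^{2p} + ⋯ + x^{2p(t-1)}` times the one with top entry `m`. Hence the contribution of
`k_t = m + p` is `r = (1 - x^p) x^p Σ_{j<t} x^{2pj}` times that of `k_t = m`, the whole series
`S` satisfies `S = Σ_{m<p} (term m) + r S`, and `(1 + x^p)(1 - r) = 1 + x^{(2t+1)p}`.
-/

open Finset

lemma IsPrimitiveRoot.prod_range_one_sub_pow_mul {R : Type*} [CommRing R] [IsDomain R]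
    {ζ : R} {n : ℕ} (h : IsPrimitiveRoot ζ n) (hn : 0 < n) {α : R} (hα : α ^ n = 1) (y : R) :
    ∏ i ∈ range n, (1 - ζ ^ i * α * y) = 1 - y ^ n := by
  classical
  rw [← one_pow n, h.pow_sub_pow_eq_prod_sub_mul 1 y hn, one_pow, Polynomial.nthRootsFinset_def,
    ← Multiset.toFinset_eq (h.nthRoots_one_nodup)]
  simp only [Finset.prod_mk]
  rw [h.nthRoots_eq hα, Multiset.map_map, Finset.prod_eq_multiset_prod, range_val]
  rfl

lemma PowerSeries.coeff_mk_sum_eq_sum_range {R : Type*} [CommSemiring R]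
    {a : ℕ → PowerSeries R} (ha : ∀ m, X ^ m ∣ a m) {N M : ℕ} (hM : N < M) :
    coeff N (mk fun n => ∑ m ∈ range (n + 1), coeff n (a m)) =
      ∑ m ∈ range M, coeff N (a m) := by
  rw [coeff_mk]
  exact sum_subset (range_subset_range.2 hM) fun m _ hm =>
    X_pow_dvd_iff.1 (ha m) N (by simpa using hm)

lemma PowerSeries.mk_sum_eq_sum_add_mul {R : Type*} [CommSemiring R] {a : ℕ → PowerSeries R}
    (ha : ∀ m, X ^ m ∣ a m) {p : ℕ} {r : PowerSeries R} (hr : ∀ m, a (m + p) = r * a m) :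
    mk (fun n => ∑ m ∈ range (n + 1), coeff n (a m)) =
      ∑ m ∈ range p, a m + r * mk fun n => ∑ m ∈ range (n + 1), coeff n (a m) := by
  ext N
  rw [coeff_mk_sum_eq_sum_range ha (by omega : N < p + (N + 1)), sum_range_add, map_add, map_sum,
    coeff_mul]
  congr 1
  calc ∑ m ∈ range (N + 1), coeff N (a (p + m))
      = ∑ m ∈ range (N + 1), coeff N (r * a m) := sum_congr rfl fun m _ => by rw [add_comm, hr]
    _ = ∑ ij ∈ antidiagonal N, coeff ij.1 r * ∑ m ∈ range (N + 1), coeff ij.2 (a m) := by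
      simp_rw [coeff_mul, mul_sum]
      exact sum_comm
    _ = _ := sum_congr rfl fun ij hij => by
      rw [coeff_mk_sum_eq_sum_range ha (M := N + 1)
        (by rw [HasAntidiagonal.mem_antidiagonal] at hij; omega)]

section ChainSum

variable {R : Type*} [CommSemiring R]

def monotoneChains (t top : ℕ) : Finset (Fin (t + 1) → Fin (top + 1)) :=
  univ.filter fun f => Monotone f ∧ f (Fin.last t) = Fin.last top

def chainSum (w : ℕ → ℕ → R) (t top : ℕ) : R :=
  ∑ f ∈ monotoneChains t top, ∏ i : Fin t, w (f i.succ) (f i.castSucc)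

@[simp] lemma mem_monotoneChains {t top : ℕ} {f : Fin (t + 1) → Fin (top + 1)} :
    f ∈ monotoneChains t top ↔ Monotone f ∧ f (Fin.last t) = Fin.last top := by
  simp [monotoneChains]

lemma monotoneChains_zero (top : ℕ) : monotoneChains 0 top = {fun _ => Fin.last top} := by
  ext f
  simp [monotoneChains, funext_iff, Fin.forall_fin_one, Subsingleton.monotone]

lemma chainSum_zero (w : ℕ → ℕ → R) (top : ℕ) : chainSum w 0 top = 1 := by
  simp [chainSum, monotoneChains_zero]

lemma sum_monotoneChains_filter_eq (w : ℕ → ℕ → R) {t top k : ℕ}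
    (hk : k + 1 ≤ top + 1) :
    ∑ f ∈ monotoneChains (t + 1) top with (f (Fin.last t).castSucc : ℕ) = k,
        ∏ i : Fin (t + 1), w (f i.succ) (f i.castSucc) =
      w top k * chainSum w t k := by
  rw [chainSum, mul_sum]
  -- `min` only makes the restriction map total: on the fibre all entries are already `≤ k`.
  refine sum_nbij' (fun f a => ⟨min (f a.castSucc) k, Nat.lt_succ_of_le (min_le_right _ _)⟩)
    (fun g => Fin.snoc (fun a => Fin.castLE hk (g a)) (Fin.last top)) ?_ ?_ ?_ ?_ ?_
  · simp only [mem_filter, mem_monotoneChains, and_imp]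
    intro f hf _ hfk
    refine ⟨fun a b hab => ?_, ?_⟩
    · exact Fin.mk_le_mk.2 (min_le_min_right _ (hf (Fin.castSucc_le_castSucc_iff.2 hab)))
    · ext; simp [hfk]
  · simp only [mem_filter, mem_monotoneChains, and_imp]
    intro g hg hgk
    refine ⟨⟨?_, Fin.snoc_last _ _⟩, ?_⟩
    · rw [← Fin.insertNth_last']
      exact Fin.insertNth_last_monotone (fun a b hab => (Fin.castLE_le_castLE_iff hk).2 (hg hab)) _
        (Fin.le_last _)
    · simp [hgk]
  · simp only [mem_filter, mem_monotoneChains, and_imp]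
    intro f hf hlast hfk
    funext a
    refine Fin.lastCases ?_ (fun b => ?_) a
    · rw [Fin.snoc_last, hlast]
    · ext
      simp [← hfk, hf (Fin.castSucc_le_castSucc_iff.2 (Fin.le_last b))]
  · intro g _
    funext a
    ext
    simp [Nat.le_of_lt_succ (g a).isLt]
  · simp only [mem_filter, mem_monotoneChains, and_imp]
    intro f hf hlast hfk
    rw [Fin.prod_univ_castSucc, mul_comm, Fin.succ_last, hlast, hfk]
    congr 1
    refine prod_congr rfl fun b _ => ?_
    have hle : ∀ a : Fin (t + 1), (f a.castSucc : ℕ) ≤ k :=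
      fun a => hfk ▸ hf (Fin.castSucc_le_castSucc_iff.2 (Fin.le_last a))
    rw [min_eq_left (Fin.succ_castSucc b ▸ hle b.succ), min_eq_left (hle _), Fin.succ_castSucc]

lemma chainSum_succ (w : ℕ → ℕ → R) (t top : ℕ) :
    chainSum w (t + 1) top = ∑ k ∈ range (top + 1), w top k * chainSum w t k := by
  rw [chainSum, ← sum_fiberwise_of_maps_to (g := fun f => (f (Fin.last t).castSucc : ℕ))
    (t := range (top + 1)) fun f _ => mem_range.2 (f _).isLt]
  exact sum_congr rfl fun k hk => sum_monotoneChains_filter_eq w (mem_range.1 hk)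

end ChainSum

@[simp] lemma qbinom_zero_right (n : ℕ) (ζ : ℂ) : qbinom n 0 ζ = 1 := by
  cases n <;> rfl

lemma qbinom_succ_succ (n k : ℕ) (ζ : ℂ) :
    qbinom (n + 1) (k + 1) ζ = qbinom n k ζ + ζ ^ (k + 1) * qbinom n (k + 1) ζ := rfl

lemma qbinom_of_lt {n k : ℕ} (h : n < k) (ζ : ℂ) : qbinom n k ζ = 0 := by
  induction n generalizing k with
  | zero => obtain ⟨k, rfl⟩ := Nat.exists_eq_add_of_lt h; rfl
  | succ n ih =>
    obtain ⟨k, rfl⟩ := Nat.exists_eq_add_of_lt h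
    rw [show n + 1 + k + 1 = (n + k + 1) + 1 by omega, qbinom_succ_succ, ih (by omega),
      ih (by omega), mul_zero, add_zero]

@[simp] lemma qbinom_self (n : ℕ) (ζ : ℂ) : qbinom n n ζ = 1 := by
  induction n with
  | zero => rfl
  | succ n ih => rw [qbinom_succ_succ, ih, qbinom_of_lt n.lt_succ_self, mul_zero, add_zero]

-- `(q; q)_k [n+k, k]_q = (q^{n+1}; q)_k`, multiplied out so that it holds at roots of unity.
lemma prod_mul_qbinom_add (ζ : ℂ) (n k : ℕ) :
    (∏ i ∈ range k, (1 - ζ ^ (i + 1))) * qbinom (n + k) k ζ =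
      ∏ i ∈ range k, (1 - ζ ^ (n + i + 1)) := by
  induction k generalizing n with
  | zero => simp
  | succ k ihk =>
    induction n with
    | zero => simp
    | succ n ihn =>
      have hshift : ∏ i ∈ range (k + 1), (1 - ζ ^ (n + i + 1)) =
          (1 - ζ ^ (n + 1)) * ∏ i ∈ range k, (1 - ζ ^ (n + 1 + i + 1)) := by
        rw [prod_range_succ', mul_comm]
        exact congrArg₂ _ rfl (prod_congr rfl fun i _ => by ring_nf)
      rw [show n + (k + 1) = n + 1 + k by omega, hshift] at ihn
      rw [show n + 1 + (k + 1) = n + 1 + k + 1 by omega, qbinom_succ_succ, prod_range_succ,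
        prod_range_succ (fun i => 1 - ζ ^ (n + 1 + i + 1))]
      rw [prod_range_succ] at ihn
      linear_combination (1 - ζ ^ (k + 1)) * ihk (n + 1) + ζ ^ (k + 1) * ihn

noncomputable def chainWeight (e : ℂ) (a b : ℕ) : PowerSeries ℂ :=
  C (e ^ (b * (b + 1)) * qbinom a b e) * X ^ (2 * b)

lemma chainV_eq_chainSum (t top : ℕ) (e : ℂ) :
    chainV t top e = chainSum (chainWeight e) t top :=
  rfl

lemma chainWeight_of_lt {a b : ℕ} (h : a < b) (e : ℂ) : chainWeight e a b = 0 := by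
  rw [chainWeight, qbinom_of_lt h, mul_zero, map_zero, zero_mul]

lemma X_pow_dvd_habiroTerm (t : ℕ) (e : ℂ) (m : ℕ) : X ^ m ∣ habiroTerm t e m :=
  ⟨pochSeries e m * chainV (t - 1) m e, by rw [habiroTerm]; ring⟩

namespace IsPrimitiveRoot

variable {p : ℕ} {e : ℂ}

lemma qbinom_eq_zero (he : IsPrimitiveRoot e p) {k : ℕ} (hk0 : 0 < k) (hkp : k < p) :
    qbinom p k e = 0 := by
  have h := prod_mul_qbinom_add e (p - k) k
  rw [Nat.sub_add_cancel hkp.le] at h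
  have hrhs : ∏ i ∈ range k, (1 - e ^ (p - k + i + 1)) = 0 :=
    prod_eq_zero (mem_range.2 (Nat.sub_lt hk0 one_pos))
      (by rw [show p - k + (k - 1) + 1 = p by omega, he.pow_eq_one, sub_self])
  have hlhs : ∏ i ∈ range k, (1 - e ^ (i + 1)) ≠ 0 :=
    prod_ne_zero_iff.2 fun i hi =>
      sub_ne_zero.2 (he.pow_ne_one_of_pos_of_lt i.succ_ne_zero (by simp at hi; omega)).symm
  exact (mul_eq_zero.1 (h.trans hrhs)).resolve_left hlhs

lemma qbinom_add (he : IsPrimitiveRoot e p) (hp : 0 < p) (m k : ℕ) :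
    qbinom (m + p) k e = qbinom m k e + if p ≤ k then qbinom m (k - p) e else 0 := by
  induction m generalizing k with
  | zero =>
    rcases Nat.lt_trichotomy k p with hkp | rfl | hpk
    · rw [if_neg hkp.not_ge, zero_add]
      rcases k.eq_zero_or_pos with rfl | hk0
      · simp
      · rw [he.qbinom_eq_zero hk0 hkp, qbinom_of_lt hk0, add_zero]
    · simp [qbinom_of_lt hp]
    · rw [if_pos hpk.le, zero_add, qbinom_of_lt hpk, qbinom_of_lt (hp.trans hpk),
        qbinom_of_lt (Nat.sub_pos_of_lt hpk), add_zero]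
  | succ m ih =>
    cases k with
    | zero => simp [hp.ne']
    | succ k =>
      rw [show m + 1 + p = m + p + 1 by omega, qbinom_succ_succ, ih, ih, qbinom_succ_succ]
      rcases Nat.lt_trichotomy (k + 1) p with hkp | hkp | hpk
      · simp only [if_neg (show ¬p ≤ k by omega), if_neg hkp.not_ge]
        ring
      · simp only [if_neg (show ¬p ≤ k by omega), hkp, Nat.sub_self,
          qbinom_zero_right, he.pow_eq_one]
        ring
      · obtain ⟨j, rfl⟩ := Nat.exists_eq_add_of_le (Nat.le_of_lt_succ hpk)
        have hpow : e ^ (p + j + 1) = e ^ (j + 1) := by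
          rw [add_assoc, pow_add, he.pow_eq_one, one_mul]
        simp only [if_pos (Nat.le_add_right p j), if_pos (by omega : p ≤ p + j + 1),
          show p + j + 1 - p = j + 1 by omega, Nat.add_sub_cancel_left, qbinom_succ_succ, hpow]
        ring

lemma pochSeries_add (he : IsPrimitiveRoot e p) (hp : 0 < p) (m : ℕ) :
    pochSeries e (m + p) = pochSeries e m * (1 - X ^ p) := by
  have hC : IsPrimitiveRoot (C e : PowerSeries ℂ) p := he.map_of_injective C_injective
  have hα : (C (e ^ (m + 1)) : PowerSeries ℂ) ^ p = 1 := by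
    rw [← map_pow, ← pow_mul, pow_mul', he.pow_eq_one, one_pow, map_one]
  rw [pochSeries, pochSeries, prod_range_add, ← hC.prod_range_one_sub_pow_mul hp hα X]
  congr 1
  refine prod_congr rfl fun i _ => ?_
  rw [← map_pow, ← map_mul, ← pow_add]
  ring_nf

lemma chainWeight_add (he : IsPrimitiveRoot e p) (hp : 0 < p) (m k : ℕ) :
    chainWeight e (m + p) k =
      chainWeight e m k + if p ≤ k then X ^ (2 * p) * chainWeight e m (k - p) else 0 := by
  simp only [chainWeight]
  rw [he.qbinom_add hp, mul_add, map_add, add_mul]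
  split_ifs with hpk
  · obtain ⟨j, rfl⟩ := Nat.exists_eq_add_of_le hpk
    have hpow : e ^ ((p + j) * (p + j + 1)) = e ^ (j * (j + 1)) := by
      rw [show (p + j) * (p + j + 1) = p * (p + 2 * j + 1) + j * (j + 1) by ring, pow_add,
        pow_mul, he.pow_eq_one, one_pow, one_mul]
    rw [Nat.add_sub_cancel_left, hpow]
    ring
  · rw [mul_zero, map_zero, zero_mul]

lemma chainV_add (he : IsPrimitiveRoot e p) (hp : 0 < p) (s m : ℕ) :
    chainV s (m + p) e = (∑ j ∈ range (s + 1), (X ^ (2 * p)) ^ j) * chainV s m e := by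
  simp only [chainV_eq_chainSum]
  induction s generalizing m with
  | zero => simp [chainSum_zero]
  | succ s ih =>
    have hlow : ∑ k ∈ range (m + p + 1), chainWeight e m k * chainSum (chainWeight e) s k =
        chainSum (chainWeight e) (s + 1) m := by
      rw [chainSum_succ]
      refine (sum_subset (range_subset_range.2 (by omega)) fun k _ hk => ?_).symm
      rw [chainWeight_of_lt (by simpa using hk), zero_mul]
    have hhigh : ∑ k ∈ range (m + p + 1),
        (if p ≤ k then X ^ (2 * p) * chainWeight e m (k - p) else 0) *
          chainSum (chainWeight e) s k =
        X ^ (2 * p) * (∑ j ∈ range (s + 1), (X ^ (2 * p)) ^ j) *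
          chainSum (chainWeight e) (s + 1) m := by
      rw [show m + p + 1 = p + (m + 1) by omega, sum_range_add, chainSum_succ, mul_sum,
        sum_eq_zero fun k hk => by rw [if_neg (by simpa using hk), zero_mul], zero_add]
      refine sum_congr rfl fun j _ => ?_
      rw [if_pos (Nat.le_add_right p j), Nat.add_sub_cancel_left, add_comm p j, ih]
      ring
    rw [chainSum_succ]
    simp only [he.chainWeight_add hp, add_mul, sum_add_distrib]
    rw [hlow, hhigh, geom_sum_succ (n := s + 1)]
    ring

lemma habiroTerm_add (he : IsPrimitiveRoot e p) (hp : 0 < p) {t : ℕ} (ht : 1 ≤ t) (m : ℕ) :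
    habiroTerm t e (m + p) =
      ((1 - X ^ p) * X ^ p * ∑ j ∈ range t, (X ^ (2 * p)) ^ j) * habiroTerm t e m := by
  rw [habiroTerm, habiroTerm, he.pochSeries_add hp, he.chainV_add hp, Nat.sub_add_cancel ht,
    pow_add]
  ring

end IsPrimitiveRoot

theorem stmt14 (p : ℕ) (hp : 1 ≤ p) (e : ℂ) (he : IsPrimitiveRoot e p)
    (t : ℕ) (ht : 1 ≤ t) :
    (1 + (PowerSeries.X : PowerSeries ℂ) ^ ((2 * t + 1) * p)) * habiroSeries t e =
      (1 + (PowerSeries.X : PowerSeries ℂ) ^ p) *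
        ∑ m ∈ Finset.range p, habiroTerm t e m := by
  have hrec := mk_sum_eq_sum_add_mul (X_pow_dvd_habiroTerm t e) (he.habiroTerm_add hp ht)
  have hgeom := mul_neg_geom_sum ((X : PowerSeries ℂ) ^ (2 * p)) t
  change habiroSeries t e = _ + _ * habiroSeries t e at hrec
  rw [← pow_mul] at hgeom
  rw [show (2 * t + 1) * p = 2 * p * t + p by ring, pow_add]
  linear_combination (1 + X ^ p) * hrec + X ^ p * habiroSeries t e * hgeom
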